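/- arXiv:math/0502466 — 3 statements merged into one kernel-verified Lean document; each statement's English description precedes it below -/
import Mathlib

section
/- Let V ⊆ S_e be a k-subspace of dimension t ≥ 2 spanned by forms of degree e ≥ 2, and suppose h_1(V) = r (i.e., the span of the order-(e−1) partial derivatives of V is all of S_1, so the associated level algebra has codimension r). If h_{e−1}(V) ≥ t·(r−1), then there exists a nonzero form F ∈ V with h_1(F) = r (i.e., there exists a Gorenstein quotient of the same socle degree having codimension r). -/
/-!
For `c ∈ k^r` let `∂_c = ∑ c_i ∂/∂y_i`. It commutes with every partial derivative, and in
characteristic zero a form of positive degree whose partials all vanish is zero (Euler's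
identity); hence `∂_c` kills a space `W` of forms of degree `n` iff it kills `D_1(W) ⊆ S_1`, and by
duality `h_1(W) = r` iff no `c ≠ 0` has `∂_c W = 0`.

If no `F ∈ V` had `h_1(F) = r`, every nonzero `F ∈ V` would be killed by some `∂_c` with `c ≠ 0`,
so `D_{e-1}(F) = {∂_c F | c ∈ k^r}` would have dimension at most `r - 1`. For a basis
`f_1, …, f_t` of `V` the bound `h_{e-1}(V) ≥ t (r - 1)` then makes the sum
`D_{e-1}(V) = ∑ D_{e-1}(f_j)` direct, so a nonzero `∂_c` killing `f_1 + ⋯ + f_t` kills every `f_j`,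
hence all of `V`, contradicting `h_1(V) = r`.
-/

open MvPolynomial

/-- One step of differentiation: the span of all first partial derivatives of elements of `W`. -/
noncomputable def derStep (k : Type*) [Field k] {σ : Type*}
    (W : Submodule k (MvPolynomial σ k)) : Submodule k (MvPolynomial σ k) :=
  Submodule.span k (⋃ i : σ, pderiv i '' (W : Set (MvPolynomial σ k)))

/-- For `W ⊆ S_e` and `u ≤ e`, `hvec k e W u = h_u(W)` is the dimension of the space `D_u(W)`
spanned by the order `e - u` partial derivatives of the elements of `W`. -/
noncomputable def hvec (k : Type*) [Field k] {σ : Type*} (e : ℕ)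
    (W : Submodule k (MvPolynomial σ k)) (u : ℕ) : ℕ :=
  Module.finrank k ((derStep k)^[e - u] W)

open Module

theorem MvPolynomial.pderiv_comm {R σ : Type*} [CommSemiring R] (i j : σ)
    (f : MvPolynomial σ R) : pderiv i (pderiv j f) = pderiv j (pderiv i f) := by
  classical
  ext m
  rcases eq_or_ne i j with rfl | hij
  · rfl
  simp only [coeff_pderiv, Finsupp.add_apply, Finsupp.single_apply, hij, hij.symm, if_false,
    add_zero, add_right_comm m]
  ring

section

variable {k : Type*} [Field k] {σ : Type*}

theorem iSupIndep_of_sum_finrank_le {M ι : Type*} [AddCommGroup M] [Module k M] [Fintype ι]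
    [DecidableEq ι] {U : ι → Submodule k M} [∀ i, FiniteDimensional k (U i)]
    (h : ∑ i, finrank k (U i) ≤ finrank k ↥(⨆ i, U i)) : iSupIndep U := by
  apply iSupIndep_of_dfinsupp_lsum_injective
  rw [← LinearMap.ker_eq_bot, ← Submodule.finrank_eq_zero]
  have hsum : finrank k ↥(⨆ i, U i) +
      finrank k (LinearMap.ker (DFinsupp.lsum ℕ fun i => (U i).subtype)) =
      ∑ i, finrank k (U i) := by
    rw [Submodule.iSup_eq_range_dfinsupp_lsum, LinearMap.finrank_range_add_finrank_ker]
    exact Module.finrank_directSum k fun i => U i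
  omega

theorem derStep_eq_iSup_map (W : Submodule k (MvPolynomial σ k)) :
    derStep k W = ⨆ i, W.map (pderiv i).toLinearMap := by
  simp only [derStep, Submodule.span_iUnion]
  congr! with i
  exact (Submodule.span_image (pderiv i).toLinearMap).trans (by rw [Submodule.span_eq])

theorem derStep_iSup {ι : Sort*} (W : ι → Submodule k (MvPolynomial σ k)) :
    derStep k (⨆ j, W j) = ⨆ j, derStep k (W j) := by
  simp only [derStep_eq_iSup_map, Submodule.map_iSup]
  exact iSup_comm

theorem derStep_bot : derStep k (⊥ : Submodule k (MvPolynomial σ k)) = ⊥ := by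
  simp [derStep_eq_iSup_map]

theorem derStep_map {φ : MvPolynomial σ k →ₗ[k] MvPolynomial σ k}
    (hφ : ∀ i f, pderiv i (φ f) = φ (pderiv i f)) (W : Submodule k (MvPolynomial σ k)) :
    derStep k (W.map φ) = (derStep k W).map φ := by
  simp only [derStep_eq_iSup_map, Submodule.map_iSup, ← Submodule.map_comp]
  refine iSup_congr fun i => ?_
  exact congrArg (Submodule.map · W) (LinearMap.ext (hφ i))

theorem iterate_derStep_map {φ : MvPolynomial σ k →ₗ[k] MvPolynomial σ k}
    (hφ : ∀ i f, pderiv i (φ f) = φ (pderiv i f)) (m : ℕ) (W : Submodule k (MvPolynomial σ k)) :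
    (derStep k)^[m] (W.map φ) = ((derStep k)^[m] W).map φ :=
  Function.Commute.iterate_left (g := Submodule.map φ) (derStep_map hφ) m W

theorem derStep_le_homogeneousSubmodule {W : Submodule k (MvPolynomial σ k)} {n : ℕ}
    (hW : W ≤ homogeneousSubmodule σ k n) : derStep k W ≤ homogeneousSubmodule σ k (n - 1) := by
  rw [derStep_eq_iSup_map]
  refine iSup_le fun i => Submodule.map_le_iff_le_comap.2 fun f hf => ?_
  exact (hW hf).pderiv

theorem iterate_derStep_le_homogeneousSubmodule {W : Submodule k (MvPolynomial σ k)} {n : ℕ}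
    (hW : W ≤ homogeneousSubmodule σ k n) (m : ℕ) :
    (derStep k)^[m] W ≤ homogeneousSubmodule σ k (n - m) := by
  induction m with
  | zero => exact hW
  | succ m ih =>
    rw [Function.iterate_succ_apply', Nat.sub_succ]
    exact derStep_le_homogeneousSubmodule ih

theorem eq_bot_of_derStep_eq_bot [CharZero k] [Fintype σ] {W : Submodule k (MvPolynomial σ k)}
    {n : ℕ} (hW : W ≤ homogeneousSubmodule σ k n) (hn : n ≠ 0) (h : derStep k W = ⊥) :
    W = ⊥ := by
  refine (Submodule.eq_bot_iff W).2 fun f hf => ?_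
  have hderiv : ∀ i, pderiv i f = 0 := fun i => by
    rw [← Submodule.mem_bot k, ← h, derStep_eq_iSup_map]
    exact Submodule.mem_iSup_of_mem i (Submodule.mem_map_of_mem hf)
  have euler := (hW hf).sum_X_mul_pderiv
  simpa [hderiv, hn, eq_comm] using euler

theorem iterate_derStep_eq_bot_iff [CharZero k] [Fintype σ] {W : Submodule k (MvPolynomial σ k)}
    {m : ℕ} (hW : W ≤ homogeneousSubmodule σ k m) : (derStep k)^[m] W = ⊥ ↔ W = ⊥ := by
  refine ⟨fun h => ?_, fun h => by subst h; exact Function.iterate_fixed derStep_bot m⟩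
  induction m generalizing W with
  | zero => exact h
  | succ m ih =>
    refine eq_bot_of_derStep_eq_bot hW m.succ_ne_zero (ih ?_ h)
    simpa using derStep_le_homogeneousSubmodule hW

instance derStep.finiteDimensional [Finite σ] (W : Submodule k (MvPolynomial σ k))
    [FiniteDimensional k W] : FiniteDimensional k (derStep k W) := by
  rw [derStep_eq_iSup_map]
  infer_instance

noncomputable def linearCoeffs : MvPolynomial σ k →ₗ[k] (σ → k) :=
  LinearMap.pi fun i => lcoeff k (Finsupp.single i 1)

theorem pderiv_eq_C_linearCoeffs {G : MvPolynomial σ k} (hG : G.IsHomogeneous 1) (i : σ) :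
    pderiv i G = C (linearCoeffs G i) := by
  rw [totalDegree_eq_zero_iff_eq_C.1 ((totalDegree_zero_iff_isHomogeneous σ).2 hG.pderiv),
    coeff_pderiv]
  simp [linearCoeffs]

section Directional

variable [Fintype σ]

noncomputable def dirDeriv : (σ → k) →ₗ[k] Module.End k (MvPolynomial σ k) :=
  Fintype.linearCombination k fun i => (pderiv i).toLinearMap

theorem dirDeriv_apply (c : σ → k) (f : MvPolynomial σ k) :
    dirDeriv c f = ∑ i, c i • pderiv i f := by
  simp [dirDeriv, Fintype.linearCombination_apply]

theorem pderiv_dirDeriv (c : σ → k) (i : σ) (f : MvPolynomial σ k) :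
    pderiv i (dirDeriv c f) = dirDeriv c (pderiv i f) := by
  simp only [dirDeriv_apply, map_sum, Derivation.map_smul, pderiv_comm i]

theorem derStep_span_singleton (F : MvPolynomial σ k) :
    derStep k (k ∙ F) = LinearMap.range (dirDeriv.flip F) := by
  have : dirDeriv.flip F = Fintype.linearCombination k fun i => pderiv i F := by
    ext c; simp [dirDeriv_apply, Fintype.linearCombination_apply]
  rw [this, Fintype.range_linearCombination, Set.range_eq_iUnion, Submodule.span_iUnion,
    derStep_eq_iSup_map]
  simp [Submodule.map_span]

theorem finrank_derStep_span_singleton_lt {F : MvPolynomial σ k} {c : σ → k} (hc : c ≠ 0)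
    (hcF : dirDeriv c F = 0) : finrank k (derStep k (k ∙ F)) < Fintype.card σ := by
  have hker : LinearMap.ker (dirDeriv.flip F) ≠ ⊥ := (Submodule.ne_bot_iff _).2 ⟨c, hcF, hc⟩
  have hrank := LinearMap.finrank_range_add_finrank_ker (dirDeriv.flip F)
  rw [Module.finrank_fintype_fun_eq_card] at hrank
  have hker0 := Submodule.finrank_eq_zero.not.2 hker
  rw [derStep_span_singleton]
  omega

theorem eq_sum_linearCoeffs {G : MvPolynomial σ k} (hG : G.IsHomogeneous 1) :
    G = ∑ i, X i * C (linearCoeffs G i) := by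
  simpa [pderiv_eq_C_linearCoeffs hG, eq_comm] using hG.sum_X_mul_pderiv

theorem dirDeriv_eq_C_dotProduct {G : MvPolynomial σ k} (hG : G.IsHomogeneous 1) (c : σ → k) :
    dirDeriv c G = C (c ⬝ᵥ linearCoeffs G) := by
  simp [dirDeriv_apply, pderiv_eq_C_linearCoeffs hG, dotProduct, C_mul', map_sum]

theorem le_ker_dirDeriv_iff_iterate_derStep [CharZero k] {W : Submodule k (MvPolynomial σ k)}
    {n : ℕ} (hW : W ≤ homogeneousSubmodule σ k n) (c : σ → k) :
    W ≤ LinearMap.ker (dirDeriv c) ↔ (derStep k)^[n - 1] W ≤ LinearMap.ker (dirDeriv c) := by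
  have hmap : W.map (dirDeriv c) ≤ homogeneousSubmodule σ k (n - 1) := by
    refine Submodule.map_le_iff_le_comap.2 fun f hf => ?_
    rw [Submodule.mem_comap, dirDeriv_apply]
    exact Submodule.sum_mem _ fun i _ => Submodule.smul_mem _ _ (hW hf).pderiv
  rw [LinearMap.le_ker_iff_map, LinearMap.le_ker_iff_map,
    ← iterate_derStep_map (pderiv_dirDeriv c), iterate_derStep_eq_bot_iff hmap]

theorem finrank_eq_card_iff_of_le_homogeneousSubmodule_one [DecidableEq σ]
    {D : Submodule k (MvPolynomial σ k)} (hD : D ≤ homogeneousSubmodule σ k 1) :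
    finrank k D = Fintype.card σ ↔ ∀ c : σ → k, D ≤ LinearMap.ker (dirDeriv c) → c = 0 := by
  have hinj : Function.Injective (linearCoeffs ∘ₗ D.subtype) := by
    rw [← LinearMap.ker_eq_bot, Submodule.eq_bot_iff]
    rintro ⟨G, hG⟩ hG0
    have hG0 : linearCoeffs G = 0 := hG0
    ext1
    simpa [hG0] using eq_sum_linearCoeffs (hD hG)
  have hrange : finrank k D = finrank k (D.map linearCoeffs) := by
    rw [← LinearMap.finrank_range_of_inj hinj, LinearMap.range_comp, Submodule.range_subtype]
  have hker (c : σ → k) : D ≤ LinearMap.ker (dirDeriv c) ↔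
      dotProductEquiv k σ c ∈ (D.map linearCoeffs).dualAnnihilator := by
    rw [Submodule.mem_dualAnnihilator]
    constructor
    · rintro h _ ⟨G, hG, rfl⟩
      have hcG := h hG
      rw [LinearMap.mem_ker, dirDeriv_eq_C_dotProduct (hD hG), C_eq_zero] at hcG
      simpa using hcG
    · intro h G hG
      rw [LinearMap.mem_ker, dirDeriv_eq_C_dotProduct (hD hG), C_eq_zero]
      simpa using h _ (Submodule.mem_map_of_mem hG)
  have htop : finrank k (D.map linearCoeffs) = Fintype.card σ ↔ D.map linearCoeffs = ⊤ := by
    rw [← Module.finrank_fintype_fun_eq_card k]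
    exact ⟨Submodule.eq_top_of_finrank_eq, fun h => by rw [h, finrank_top]⟩
  rw [hrange, htop, ← Submodule.dualAnnihilator_eq_bot_iff, Submodule.eq_bot_iff,
    (dotProductEquiv k σ).toEquiv.forall_congr_right.symm]
  simp [hker]

theorem hvec_one_eq_card_iff [CharZero k] [DecidableEq σ] {W : Submodule k (MvPolynomial σ k)}
    {n : ℕ} (hW : W ≤ homogeneousSubmodule σ k n) (hn : n ≠ 0) :
    hvec k n W 1 = Fintype.card σ ↔ ∀ c : σ → k, W ≤ LinearMap.ker (dirDeriv c) → c = 0 := by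
  have hD := iterate_derStep_le_homogeneousSubmodule hW (n - 1)
  rw [Nat.sub_sub_self (Nat.one_le_iff_ne_zero.2 hn)] at hD
  simp only [hvec, finrank_eq_card_iff_of_le_homogeneousSubmodule_one hD,
    le_ker_dirDeriv_iff_iterate_derStep hW]

theorem exists_ne_zero_dirDeriv_eq_zero [CharZero k] [DecidableEq σ] {F : MvPolynomial σ k}
    {n : ℕ} (hF : F.IsHomogeneous n) (hn : n ≠ 0) (h : hvec k n (k ∙ F) 1 ≠ Fintype.card σ) :
    ∃ c ≠ 0, dirDeriv c F = 0 := by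
  have hFn : k ∙ F ≤ homogeneousSubmodule σ k n := (Submodule.span_singleton_le_iff_mem _ _).2 hF
  obtain ⟨c, hcF, hc⟩ : ∃ c, k ∙ F ≤ LinearMap.ker (dirDeriv c) ∧ c ≠ 0 := by
    by_contra! hno
    exact h ((hvec_one_eq_card_iff hFn hn).2 hno)
  exact ⟨c, hc, hcF (Submodule.mem_span_singleton_self F)⟩

theorem exists_ne_zero_le_ker_dirDeriv {V : Submodule k (MvPolynomial σ k)}
    [FiniteDimensional k V] (hV : 0 < finrank k V)
    (hbound : finrank k V * (Fintype.card σ - 1) ≤ finrank k (derStep k V))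
    (hker : ∀ F ∈ V, F ≠ 0 → ∃ c ≠ 0, dirDeriv c F = 0) :
    ∃ c ≠ 0, V ≤ LinearMap.ker (dirDeriv c) := by
  set b := Module.finBasis k V
  set f : Fin (finrank k V) → MvPolynomial σ k := V.subtype ∘ b
  have hfV (j) : f j ∈ V := (b j).2
  have hf : LinearIndependent k f := b.linearIndependent.map' V.subtype V.ker_subtype
  have hspan : Submodule.span k (Set.range f) = V := by
    rw [Set.range_comp, Submodule.span_image, b.span_eq, Submodule.map_top,
      Submodule.range_subtype]
  have hindep : iSupIndep fun j => derStep k (k ∙ f j) := by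
    refine iSupIndep_of_sum_finrank_le ?_
    rw [← derStep_iSup, ← Submodule.span_range_eq_iSup, hspan]
    calc ∑ j, finrank k (derStep k (k ∙ f j)) ≤ ∑ _j : Fin (finrank k V), (Fintype.card σ - 1) :=
          Finset.sum_le_sum fun j _ => by
            obtain ⟨c, hc, hcf⟩ := hker (f j) (hfV j) (hf.ne_zero j)
            have := finrank_derStep_span_singleton_lt hc hcf
            omega
      _ ≤ finrank k (derStep k V) := by simpa using hbound
  have hsum : ∑ j, f j ≠ 0 := fun h0 =>
    one_ne_zero (Fintype.linearIndependent_iff.1 hf (fun _ => 1) (by simpa using h0) ⟨0, hV⟩)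
  obtain ⟨c, hc, hcg⟩ := hker _ (Submodule.sum_mem _ fun j _ => hfV j) hsum
  have hcf (j) : dirDeriv c (f j) = 0 := by
    refine (iSupIndep_iff_finsetSum_eq_zero_imp_eq_zero _).1 hindep Finset.univ _
      (fun j _ => ?_) (by rw [← map_sum (dirDeriv c)]; exact hcg) j (Finset.mem_univ j)
    rw [derStep_span_singleton]
    exact ⟨c, rfl⟩
  refine ⟨c, hc, hspan ▸ Submodule.span_le.2 ?_⟩
  rintro _ ⟨j, rfl⟩
  exact hcf j

end Directional

end

theorem corollary_2_6_general {k : Type*} [Field k] [CharZero k] {r : ℕ}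
    {e t : ℕ} (he : 2 ≤ e) (ht : 2 ≤ t)
    (V : Submodule k (MvPolynomial (Fin r) k))
    (hVhom : ∀ f ∈ V, MvPolynomial.IsHomogeneous f e)
    (hVdim : Module.finrank k V = t)
    (hcodim : hvec k e V 1 = r)
    (hbound : hvec k e V (e - 1) ≥ t * (r - 1)) :
    ∃ F ∈ V, F ≠ 0 ∧ hvec k e (Submodule.span k {F}) 1 = r := by
  have hcard : Fintype.card (Fin r) = r := Fintype.card_fin r
  have hderV : hvec k e V (e - 1) = finrank k (derStep k V) := by
    rw [hvec, Nat.sub_sub_self (by omega), Function.iterate_one]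
  have : FiniteDimensional k V := FiniteDimensional.of_finrank_pos (by omega)
  by_contra! hcon
  obtain ⟨c, hc, hcV⟩ := exists_ne_zero_le_ker_dirDeriv (by omega)
    (by rw [hVdim, hcard, ← hderV]; exact hbound) fun F hF hF0 =>
      exists_ne_zero_dirDeriv_eq_zero (hVhom F hF) (by omega) (by rw [hcard]; exact hcon F hF hF0)
  exact hc ((hvec_one_eq_card_iff hVhom (by omega)).1 (hcodim.trans hcard.symm) c hcV)

/-- Corollary 2.6: if `h_1(V) = r` and `h_{e-1}(V) ≥ t·(r - 1)`, then there is a Gorenstein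
quotient of the same socle degree having codimension `r`, i.e. a nonzero `F ∈ V` with
`h_1(F) = r`. -/
theorem corollary_2_6 {k : Type*} [Field k] [CharZero k] {r : ℕ} (hr : 1 ≤ r)
    {e t : ℕ} (he : 2 ≤ e) (ht : 2 ≤ t)
    (V : Submodule k (MvPolynomial (Fin r) k))
    (hVhom : ∀ f ∈ V, MvPolynomial.IsHomogeneous f e)
    (hVdim : Module.finrank k V = t)
    (hcodim : hvec k e V 1 = r)
    (hbound : hvec k e V (e - 1) ≥ t * (r - 1)) :
    ∃ F ∈ V, F ≠ 0 ∧ hvec k e (Submodule.span k {F}) 1 = r :=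
  corollary_2_6_general he ht V hVhom hVdim hcodim hbound
end

section
/- Let t and j be integers with t ≥ 3 and 2 ≤ j ≤ t−1. Then (j−1)·C(t,j) − C(t−1,j−1) > 0, j·C(t,j+1) − C(t−1,j) > 0, and (j−1)·C(t,j) · ( j·C(t,j+1) − C(t−1,j) ) > j·C(t,j+1) · ( (j−1)·C(t,j) − C(t−1,j−1) ); equivalently, the ratio (j−1)C(t,j) / ((j−1)C(t,j) − C(t−1,j−1)) strictly exceeds j·C(t,j+1) / (j·C(t,j+1) − C(t−1,j)). -/
/-- The combinatorial inequality in the proof of Lemma 2.8: for `t ≥ 3` and `2 ≤ j ≤ t - 1`,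
both `(j-1)·C(t,j) - C(t-1,j-1)` and `j·C(t,j+1) - C(t-1,j)` are positive, and
`(j-1)·C(t,j) / ((j-1)·C(t,j) - C(t-1,j-1)) > j·C(t,j+1) / (j·C(t,j+1) - C(t-1,j))`,
the latter stated in the equivalent cross-multiplied form. -/
theorem lemma_2_8_inequality (t j : ℕ) (ht : 3 ≤ t) (hj : 2 ≤ j) (hjt : j ≤ t - 1) :
    0 < ((j : ℤ) - 1) * t.choose j - (t - 1).choose (j - 1) ∧
    0 < (j : ℤ) * t.choose (j + 1) - (t - 1).choose j ∧
    ((j : ℤ) - 1) * t.choose j * ((j : ℤ) * t.choose (j + 1) - (t - 1).choose j) >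
      (j : ℤ) * t.choose (j + 1) * (((j : ℤ) - 1) * t.choose j - (t - 1).choose (j - 1)) := by
  obtain ⟨s, rfl⟩ : ∃ s, t = s + 1 := ⟨t - 1, by omega⟩
  obtain ⟨i, rfl⟩ : ∃ i, j = i + 1 := ⟨j - 1, by omega⟩
  simp only [Nat.add_sub_cancel] at *
  have hs : 2 ≤ s := by omega
  have hi : 1 ≤ i := by omega
  have his : i + 1 ≤ s := hjt
  have h1 : ((s + 1 : ℤ)) * s.choose i = (s + 1).choose (i + 1) * (i + 1) := by
    exact_mod_cast congrArg (Nat.cast : ℕ → ℤ) (Nat.add_one_mul_choose_eq s i)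
  have h2 : ((s + 1 : ℤ)) * s.choose (i + 1) = (s + 1).choose (i + 2) * (i + 2) := by
    exact_mod_cast congrArg (Nat.cast : ℕ → ℤ) (Nat.add_one_mul_choose_eq s (i + 1))
  have ha : (0 : ℤ) < s.choose i := by exact_mod_cast Nat.choose_pos (by omega)
  have hb : (0 : ℤ) < s.choose (i + 1) := by exact_mod_cast Nat.choose_pos (by omega)
  have hiZ : (1 : ℤ) ≤ i := by exact_mod_cast hi
  have hsZ : (2 : ℤ) ≤ s := by exact_mod_cast hs
  set A : ℤ := ((s + 1).choose (i + 1) : ℤ) with hA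
  set B : ℤ := ((s + 1).choose (i + 2) : ℤ) with hB
  set a : ℤ := (s.choose i : ℤ) with haa
  set b : ℤ := (s.choose (i + 1) : ℤ) with hbb
  push_cast
  have key1 : 0 < (i : ℤ) * A - a := by
    have h : ((i : ℤ) + 1) * ((i : ℤ) * A - a) = ((i : ℤ) * s - 1) * a := by
      linear_combination (-(i : ℤ)) * h1
    nlinarith [mul_pos (show (0:ℤ) < (i:ℤ) * s - 1 by nlinarith) ha]
  have key2 : 0 < ((i : ℤ) + 1) * B - b := by
    have h : ((i : ℤ) + 2) * (((i : ℤ) + 1) * B - b) = (((i : ℤ) + 1) * s - 1) * b := by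
      linear_combination (-((i : ℤ) + 1)) * h2
    nlinarith [mul_pos (show (0:ℤ) < ((i:ℤ) + 1) * s - 1 by nlinarith) hb]
  refine ⟨by linarith [key1], by linarith [key2], ?_⟩
  -- need: i*A*((i+1)*B - b) > (i+1)*B*(i*A - a), i.e. (i+1)*B*a > i*A*b
  have key3 : ((i : ℤ) + 1) * B * a > (i : ℤ) * A * b := by
    have e1 : ((i : ℤ) + 1) * ((i : ℤ) + 2) * (((i : ℤ) + 1) * B * a)
        = ((i : ℤ) + 1) * ((i : ℤ) + 1) * ((s : ℤ) + 1) * a * b := by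
      linear_combination (-((i : ℤ) + 1) ^ 2 * a) * h2
    have e2 : ((i : ℤ) + 1) * ((i : ℤ) + 2) * ((i : ℤ) * A * b)
        = (i : ℤ) * ((i : ℤ) + 2) * ((s : ℤ) + 1) * a * b := by
      linear_combination (-(i : ℤ) * ((i : ℤ) + 2) * b) * h1
    have hpos : (0:ℤ) < ((i : ℤ) + 1) * ((i : ℤ) + 2) := by positivity
    have hlt : ((i : ℤ) + 1) * ((i : ℤ) + 2) * ((i : ℤ) * A * b)
        < ((i : ℤ) + 1) * ((i : ℤ) + 2) * (((i : ℤ) + 1) * B * a) := by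
      rw [e1, e2]
      nlinarith [mul_pos (mul_pos ha hb) (show (0:ℤ) < (s:ℤ)+1 by linarith)]
    exact lt_of_mul_lt_mul_left hlt (le_of_lt hpos)
  linarith [key3]
end

section
/- Let p ≥ 1, t ≥ 2 and e ≥ 2 be integers, let S = k[y_1,…,y_{(t+1)p}], and for j = 1,…,t set F_j = ∑_{i=1}^{p} y_{jp+i} · y_i^{e−1}, and let V = span(F_1,…,F_t). Then F_1,…,F_t are linearly independent (so dim_k V = t), and for every integer c with 1 ≤ c ≤ t and every c-dimensional k-subspace W ⊆ V one has h_u(W) = (c+1)·p for every integer u with 1 ≤ u ≤ e−1. In particular (taking c = t) h_u(V) = (t+1)p for 1 ≤ u ≤ e−1, so the lower bound of the Main Theorem, (t²−1)·h_u(W) ≥ (t−c)·h_{e−u}(V) + (c·t−1)·h_u(V), is attained with equality for these algebras. -/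
open MvPolynomial

/-!
Write `x_i = y_i` and `z_{j,i} = y_{jp+i}`, so that `∑_j a_j F_j = ∑_i L_{a,i} x_i^{e-1}`
with the linear forms `L_{a,i} = ∑_j a_j z_{j,i}`. If `W` corresponds to a `c`-dimensional
space `U` of coefficient vectors `a` with basis `A_1, …, A_c`, then for `1 ≤ u ≤ e - 1` the space
`D_u(W)` is spanned by the `p` powers `x_i^u` and the `c p` products `L_{A_m,i} x_i^{u-1}`:
differentiating in `x_i` lowers the exponent of `x_i`, while differentiating in `z_{j,i}` strips
off a linear form. These `(c + 1) p` polynomials are linearly independent, since `∂/∂z_{j,i}`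
separates the second family into the rows of `A` and the first family consists of distinct
monomials.
-/

open Function Module

section derStep

variable {k σ : Type*} [Field k]

theorem derStep_mono {W W' : Submodule k (MvPolynomial σ k)} (h : W ≤ W') :
    derStep k W ≤ derStep k W' :=
  Submodule.span_mono (Set.iUnion_mono fun _ => Set.image_mono h)

theorem pderiv_mem_derStep {W : Submodule k (MvPolynomial σ k)} {f : MvPolynomial σ k}
    (hf : f ∈ W) (v : σ) : pderiv v f ∈ derStep k W :=
  Submodule.subset_span (Set.mem_iUnion.2 ⟨v, f, hf, rfl⟩)

theorem mem_derStep_of_pderiv_eq_smul {W : Submodule k (MvPolynomial σ k)}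
    {f g : MvPolynomial σ k} (hf : f ∈ W) (v : σ) {c : k} (hc : c ≠ 0)
    (h : pderiv v f = c • g) : g ∈ derStep k W := by
  have := Submodule.smul_mem _ c⁻¹ (pderiv_mem_derStep hf v)
  rwa [h, inv_smul_smul₀ hc] at this

theorem derStep_span_le {T : Set (MvPolynomial σ k)} {M : Submodule k (MvPolynomial σ k)}
    (h : ∀ v, ∀ f ∈ T, pderiv v f ∈ M) : derStep k (Submodule.span k T) ≤ M := by
  refine Submodule.span_le.2 (Set.iUnion_subset fun v => ?_)
  rintro _ ⟨f, hf, rfl⟩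
  exact (Submodule.span_le (p := M.comap (pderiv v).toLinearMap)).2 (h v) hf

end derStep

theorem Submodule.exists_map_eq_of_le_range {k V M : Type*} [Field k] [AddCommGroup V]
    [Module k V] [AddCommGroup M] [Module k M] {Φ : V →ₗ[k] M} (hΦ : Injective Φ)
    {W : Submodule k M} (hW : W ≤ LinearMap.range Φ) :
    ∃ U : Submodule k V, U.map Φ = W ∧ finrank k U = finrank k W := by
  refine ⟨W.comap Φ, map_comap_eq_self hW, ?_⟩
  conv_rhs => rw [← map_comap_eq_self hW]
  exact (equivMapOfInjective Φ hΦ _).finrank_eq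

namespace MvPolynomial

variable {k σ : Type*} [Field k]

theorem pderiv_X_pow_self (w : σ) (n : ℕ) :
    pderiv w (X w ^ n : MvPolynomial σ k) = (n : k) • X w ^ (n - 1) := by
  rw [pderiv_pow, pderiv_X_self, mul_one, ← map_natCast (C (σ := σ)), C_mul']

theorem pderiv_X_pow_of_ne {v w : σ} (h : w ≠ v) (n : ℕ) :
    pderiv v (X w ^ n : MvPolynomial σ k) = 0 := by
  rw [pderiv_pow, pderiv_X_of_ne h, mul_zero]

theorem linearIndependent_X_pow {u : ℕ} (hu : u ≠ 0) :
    LinearIndependent k (fun w : σ => (X w ^ u : MvPolynomial σ k)) := by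
  have h := (basisMonomials σ k).linearIndependent.comp _ (Finsupp.single_left_injective hu)
  simp only [coe_basisMonomials] at h
  simpa [comp_def, X_pow_eq_monomial] using h

end MvPolynomial

-- Variables are indexed through `y`: `y (none, i)` is `x_i` and `y (some j, i)` is `z_{j,i}`.
section forms

variable {k σ ι τ : Type*} [Field k] [Fintype τ] {y : Option τ × ι → σ}

variable (y) in
noncomputable def linForm (a : τ → k) (i : ι) : MvPolynomial σ k :=
  ∑ j, a j • X (y (some j, i))

theorem exists_pderiv_linForm_eq_C (v : σ) (a : τ → k) (i : ι) :
    ∃ r : k, pderiv v (linForm y a i) = C r := by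
  classical
  refine ⟨∑ j, if y (some j, i) = v then a j else 0, ?_⟩
  simp [linForm, map_sum, pderiv_X, Pi.single_apply, smul_eq_C_mul, apply_ite]

theorem pderiv_none_linForm (hy : Injective y) (i' : ι) (a : τ → k) (i : ι) :
    pderiv (y (none, i')) (linForm y a i) = 0 := by
  rw [linForm, map_sum]
  refine Finset.sum_eq_zero fun j _ => ?_
  rw [Derivation.map_smul, pderiv_X_of_ne (hy.ne (by simp)), smul_zero]

theorem pderiv_some_linForm_self (hy : Injective y) (j : τ) (a : τ → k) (i : ι) :
    pderiv (y (some j, i)) (linForm y a i) = C (a j) := by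
  rw [linForm, map_sum, Finset.sum_eq_single j]
  · rw [Derivation.map_smul, pderiv_X_self, smul_eq_C_mul, mul_one]
  · intro j' _ hj'
    rw [Derivation.map_smul, pderiv_X_of_ne (hy.ne (by simpa using hj')), smul_zero]
  · simp

theorem pderiv_some_linForm_of_ne (hy : Injective y) {i i' : ι} (h : i ≠ i') (j : τ)
    (a : τ → k) : pderiv (y (some j, i')) (linForm y a i) = 0 := by
  rw [linForm, map_sum]
  refine Finset.sum_eq_zero fun j' _ => ?_
  rw [Derivation.map_smul, pderiv_X_of_ne (hy.ne (by simp [h])), smul_zero]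

theorem pderiv_none_linForm_mul_pow_self (hy : Injective y) (a : τ → k) (i : ι) (n : ℕ) :
    pderiv (y (none, i)) (linForm y a i * X (y (none, i)) ^ n) =
      (n : k) • (linForm y a i * X (y (none, i)) ^ (n - 1)) := by
  rw [pderiv_mul, pderiv_none_linForm hy, zero_mul, zero_add, pderiv_X_pow_self, mul_smul_comm]

theorem pderiv_some_linForm_mul_pow_self (hy : Injective y) (j : τ) (a : τ → k) (i : ι)
    (n : ℕ) : pderiv (y (some j, i)) (linForm y a i * X (y (none, i)) ^ n) =
      a j • X (y (none, i)) ^ n := by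
  rw [pderiv_mul, pderiv_some_linForm_self hy, pderiv_X_pow_of_ne (hy.ne (by simp)), mul_zero,
    add_zero, C_mul']

theorem pderiv_linForm_mul_pow_of_ne (hy : Injective y) {i i' : ι} (h : i ≠ i')
    (o : Option τ) (a : τ → k) (n : ℕ) :
    pderiv (y (o, i')) (linForm y a i * X (y (none, i)) ^ n) = 0 := by
  rw [pderiv_mul, pderiv_X_pow_of_ne (hy.ne (by simp [h])), mul_zero, add_zero]
  cases o with
  | none => rw [pderiv_none_linForm hy, zero_mul]
  | some j => rw [pderiv_some_linForm_of_ne hy h, zero_mul]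

variable [Fintype ι]

variable (k y) in
noncomputable def stdForm (d : ℕ) (j : τ) : MvPolynomial σ k :=
  ∑ i, X (y (some j, i)) * X (y (none, i)) ^ d

theorem linearCombination_stdForm (d : ℕ) (a : τ → k) :
    Fintype.linearCombination k (stdForm k y d) a = ∑ i, linForm y a i * X (y (none, i)) ^ d := by
  simp only [Fintype.linearCombination_apply, stdForm, linForm, Finset.smul_sum, Finset.sum_mul,
    smul_mul_assoc]
  exact Finset.sum_comm

theorem pderiv_some_linearCombination_stdForm (hy : Injective y) (j : τ) (i : ι) (d : ℕ)
    (a : τ → k) : pderiv (y (some j, i)) (Fintype.linearCombination k (stdForm k y d) a) =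
      a j • X (y (none, i)) ^ d := by
  rw [linearCombination_stdForm, map_sum, Finset.sum_eq_single i
    (fun i' _ h => pderiv_linForm_mul_pow_of_ne hy h _ _ _) (by simp),
    pderiv_some_linForm_mul_pow_self hy]

theorem pderiv_none_linearCombination_stdForm (hy : Injective y) (i : ι) (d : ℕ) (a : τ → k) :
    pderiv (y (none, i)) (Fintype.linearCombination k (stdForm k y d) a) =
      (d : k) • (linForm y a i * X (y (none, i)) ^ (d - 1)) := by
  rw [linearCombination_stdForm, map_sum, Finset.sum_eq_single i
    (fun i' _ h => pderiv_linForm_mul_pow_of_ne hy h _ _ _) (by simp),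
    pderiv_none_linForm_mul_pow_self hy]

theorem linearIndependent_stdForm (hy : Injective y) [Nonempty ι] (d : ℕ) :
    LinearIndependent k (stdForm k y d) := by
  refine linearIndependent_iff_injective_fintypeLinearCombination.2 <|
    (injective_iff_map_eq_zero _).2 fun a ha => funext fun j => ?_
  obtain ⟨i⟩ := ‹Nonempty ι›
  have h := pderiv_some_linearCombination_stdForm hy j i d a
  rw [ha, map_zero, eq_comm, smul_eq_zero] at h
  exact h.resolve_right (pow_ne_zero _ (X_ne_zero _))

end forms

section derivSpan

variable {k σ ι τ κ : Type*} [Field k] [Fintype τ] {y : Option τ × ι → σ}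

variable (y) in
noncomputable def derivGens (A : κ → τ → k) (u : ℕ) : ι ⊕ κ × ι → MvPolynomial σ k
  | .inl i => X (y (none, i)) ^ u
  | .inr (m, i) => linForm y (A m) i * X (y (none, i)) ^ (u - 1)

variable (y) in
noncomputable def derivSpan (A : κ → τ → k) (u : ℕ) : Submodule k (MvPolynomial σ k) :=
  Submodule.span k (Set.range (derivGens y A u))

theorem derivGens_mem_derivSpan (A : κ → τ → k) (u : ℕ) (q : ι ⊕ κ × ι) :
    derivGens y A u q ∈ derivSpan y A u :=
  Submodule.subset_span ⟨q, rfl⟩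

theorem pderiv_derivGens_succ_mem (A : κ → τ → k) (u : ℕ) (v : σ) (q : ι ⊕ κ × ι) :
    pderiv v (derivGens y A (u + 1) q) ∈ derivSpan y A u := by
  rcases q with i | ⟨m, i⟩
  · by_cases h : y (none, i) = v
    · subst h
      rw [derivGens, pderiv_X_pow_self, Nat.add_sub_cancel]
      exact Submodule.smul_mem _ _ (derivGens_mem_derivSpan A u (.inl i))
    · rw [derivGens, pderiv_X_pow_of_ne h]
      exact Submodule.zero_mem _
  · obtain ⟨r, hr⟩ := exists_pderiv_linForm_eq_C v (A m) i
    rw [derivGens, Nat.add_sub_cancel, pderiv_mul, hr, C_mul']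
    refine Submodule.add_mem _ (Submodule.smul_mem _ _ (derivGens_mem_derivSpan A u (.inl i))) ?_
    by_cases h : y (none, i) = v
    · subst h
      rw [pderiv_X_pow_self, mul_smul_comm]
      exact Submodule.smul_mem _ _ (derivGens_mem_derivSpan A u (.inr (m, i)))
    · rw [pderiv_X_pow_of_ne h, mul_zero]
      exact Submodule.zero_mem _

theorem derStep_derivSpan_succ [CharZero k] (hy : Injective y) (A : κ → τ → k) {u : ℕ}
    (hu : 1 ≤ u) : derStep k (derivSpan y A (u + 1)) = derivSpan y A u := by
  refine le_antisymm (derStep_span_le ?_) (Submodule.span_le.2 ?_)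
  · rintro v _ ⟨q, rfl⟩
    exact pderiv_derivGens_succ_mem A u v q
  · rintro _ ⟨i | ⟨m, i⟩, rfl⟩
    · refine mem_derStep_of_pderiv_eq_smul (derivGens_mem_derivSpan A (u + 1) (.inl i))
        (y (none, i)) (Nat.cast_ne_zero.2 u.succ_ne_zero) ?_
      rw [derivGens, pderiv_X_pow_self, Nat.add_sub_cancel, derivGens]
    · refine mem_derStep_of_pderiv_eq_smul (derivGens_mem_derivSpan A (u + 1) (.inr (m, i)))
        (y (none, i)) (Nat.cast_ne_zero.2 (by omega : u ≠ 0)) ?_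
      rw [derivGens, Nat.add_sub_cancel, pderiv_none_linForm_mul_pow_self hy, derivGens]

theorem linearIndependent_derivGens [Fintype ι] [Fintype κ] (hy : Injective y)
    {A : κ → τ → k} (hA : LinearIndependent k A) {u : ℕ} (hu : 1 ≤ u) :
    LinearIndependent k (derivGens y A u) := by
  rw [Fintype.linearIndependent_iff]
  intro g hg
  have hinr : ∀ m i, g (.inr (m, i)) = 0 := by
    intro m i
    refine Fintype.linearIndependent_iff.1 hA (fun m' => g (.inr (m', i))) (funext fun j => ?_) m
    have hl : ∀ i', pderiv (y (some j, i)) (derivGens y A u (.inl i')) = 0 := fun i' =>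
      pderiv_X_pow_of_ne (hy.ne (by simp)) u
    have hr : ∀ m', ∑ i', g (.inr (m', i')) •
        pderiv (y (some j, i)) (derivGens y A u (.inr (m', i'))) =
          (g (.inr (m', i)) * A m' j) • X (y (none, i)) ^ (u - 1) := fun m' => by
      rw [Finset.sum_eq_single i (fun i' _ h => by
          rw [derivGens, pderiv_linForm_mul_pow_of_ne hy h, smul_zero]) (by simp),
        derivGens, pderiv_some_linForm_mul_pow_self hy, smul_smul]
    have h := congrArg (pderiv (y (some j, i))) hg
    rw [Fintype.sum_sum_type, Fintype.sum_prod_type, map_add, map_zero, map_sum, map_sum] at h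
    simp only [map_sum, Derivation.map_smul, hl, smul_zero, Finset.sum_const_zero, zero_add, hr,
      ← Finset.sum_smul] at h
    simpa using (smul_eq_zero.1 h).resolve_right (pow_ne_zero _ (X_ne_zero (R := k) _))
  have hinl : ∀ i, g (.inl i) = 0 := by
    have h : ∑ i, g (.inl i) • (X (y (none, i)) ^ u : MvPolynomial σ k) = 0 := by
      simpa [Fintype.sum_sum_type, hinr, derivGens] using hg
    exact Fintype.linearIndependent_iff.1 ((linearIndependent_X_pow (by omega)).comp _
      (hy.comp (Prod.mk_right_injective none))) _ h
  rintro (i | ⟨m, i⟩)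
  exacts [hinl i, hinr m i]

theorem finrank_derivSpan [Fintype ι] [Fintype κ] (hy : Injective y) {A : κ → τ → k}
    (hA : LinearIndependent k A) {u : ℕ} (hu : 1 ≤ u) :
    finrank k (derivSpan y A u) = (Fintype.card κ + 1) * Fintype.card ι := by
  rw [derivSpan, finrank_span_eq_card (linearIndependent_derivGens hy hA hu)]
  simp only [Fintype.card_sum, Fintype.card_prod]
  ring

end derivSpan

section hvec

variable {k σ ι τ κ : Type*} [Field k] [CharZero k] [Fintype ι] [Fintype τ]
  {y : Option τ × ι → σ}

theorem derStep_span_stdForm (hy : Injective y) {A : κ → τ → k} {m : κ} {j : τ}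
    (hA : A m j ≠ 0) {d : ℕ} (hd : 1 ≤ d) :
    derStep k (Submodule.span k
      (Set.range (Fintype.linearCombination k (stdForm k y d) ∘ A))) =
      derivSpan y A d := by
  refine le_antisymm
    ((derStep_mono (Submodule.span_le.2 ?_)).trans (derStep_derivSpan_succ hy A hd).le)
    (Submodule.span_le.2 ?_)
  · rintro _ ⟨m', rfl⟩
    rw [comp_apply, linearCombination_stdForm]
    exact Submodule.sum_mem _ fun i _ => derivGens_mem_derivSpan A (d + 1) (.inr (m', i))
  · rintro _ ⟨i | ⟨m', i⟩, rfl⟩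
    · exact mem_derStep_of_pderiv_eq_smul (Submodule.subset_span ⟨m, rfl⟩) (y (some j, i)) hA
        (pderiv_some_linearCombination_stdForm hy j i d (A m))
    · exact mem_derStep_of_pderiv_eq_smul (Submodule.subset_span ⟨m', rfl⟩) (y (none, i))
        (Nat.cast_ne_zero.2 (by omega)) (pderiv_none_linearCombination_stdForm hy i d (A m'))

theorem iterate_derStep_span_stdForm (hy : Injective y) {A : κ → τ → k} {m : κ} {j : τ}
    (hA : A m j ≠ 0) {d s : ℕ} (hs : 1 ≤ s) (hsd : s ≤ d) :
    (derStep k)^[s] (Submodule.span k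
      (Set.range (Fintype.linearCombination k (stdForm k y d) ∘ A))) =
      derivSpan y A (d + 1 - s) := by
  induction s, hs using Nat.le_induction with
  | base => rw [iterate_one, derStep_span_stdForm hy hA (by omega), Nat.add_sub_cancel]
  | succ s hs ih =>
    rw [iterate_succ_apply', ih (by omega), show d + 1 - s = d + 1 - (s + 1) + 1 by omega,
      derStep_derivSpan_succ hy A (by omega)]

theorem hvec_map_stdForm (hy : Injective y) {U : Submodule k (τ → k)} (hU : U ≠ ⊥)
    {e u : ℕ} (hu : 1 ≤ u) (hue : u < e) :
    hvec k e (U.map (Fintype.linearCombination k (stdForm k y (e - 1)))) u =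
      (finrank k U + 1) * Fintype.card ι := by
  set b := Module.finBasis k U
  set A : Fin (finrank k U) → τ → k := fun m => b m
  have hA : LinearIndependent k A := b.linearIndependent.map' U.subtype U.ker_subtype
  have hUA : Submodule.span k (Set.range A) = U := by
    rw [show Set.range A = U.subtype '' Set.range b from Set.range_comp _ _,
      Submodule.span_image, b.span_eq, Submodule.map_subtype_top]
  have hW : U.map (Fintype.linearCombination k (stdForm k y (e - 1))) =
      Submodule.span k (Set.range (Fintype.linearCombination k (stdForm k y (e - 1)) ∘ A)) := by
    rw [Set.range_comp, Submodule.span_image, hUA]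
  obtain ⟨j, hj⟩ := Function.ne_iff.1 (hA.ne_zero ⟨0, Submodule.one_le_finrank_iff.2 hU⟩)
  rw [hvec, hW, iterate_derStep_span_stdForm hy hj (by omega) (by omega),
    show e - 1 + 1 - (e - u) = u by omega, finrank_derivSpan hy hA hu, Fintype.card_fin]

end hvec

/-- Example 2.11: in `S = k[y_1,…,y_{(t+1)p}]`, the forms
`F_j = ∑_{i=1}^p y_{jp+i}·y_i^{e-1}` (for `j = 1,…,t`) are linearly independent, every
`c`-dimensional subspace `W` of `V = ⟨F_1,…,F_t⟩` has `h_u(W) = (c+1)·p` for `1 ≤ u ≤ e-1`,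
and in particular `h_u(V) = (t+1)·p`, so the bound of the Main Theorem is attained. -/
theorem example_2_11 {k : Type*} [Field k] [CharZero k]
    (p t e : ℕ) (hp : 1 ≤ p) (ht : 2 ≤ t)
    (F : Fin t → MvPolynomial (Fin ((t + 1) * p)) k)
    (hF : ∀ j : Fin t, F j = ∑ i : Fin p,
      X (⟨(j.1 + 1) * p + i.1, by
            have h1 : j.1 + 1 + 1 ≤ t + 1 := by omega
            have h2 := i.2
            calc (j.1 + 1) * p + i.1 < (j.1 + 1) * p + p := by omega
              _ = (j.1 + 1 + 1) * p := by ring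
              _ ≤ (t + 1) * p := Nat.mul_le_mul_right p h1⟩ : Fin ((t + 1) * p)) *
      X (⟨i.1, lt_of_lt_of_le i.2 (Nat.le_mul_of_pos_left p (by omega))⟩ :
            Fin ((t + 1) * p)) ^ (e - 1)) :
    LinearIndependent k F ∧
    (∀ c : ℕ, 1 ≤ c → c ≤ t →
      ∀ W : Submodule k (MvPolynomial (Fin ((t + 1) * p)) k),
        W ≤ Submodule.span k (Set.range F) → Module.finrank k W = c →
        ∀ u : ℕ, 1 ≤ u → u ≤ e - 1 → hvec k e W u = (c + 1) * p) ∧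
    (∀ u : ℕ, 1 ≤ u → u ≤ e - 1 →
      hvec k e (Submodule.span k (Set.range F)) u = (t + 1) * p) := by
  -- `(none, i) ↦ i` and `(some j, i) ↦ (j + 1) * p + i`
  set y : Option (Fin t) × Fin p → Fin ((t + 1) * p) :=
    finProdFinEquiv ∘ Prod.map (finSuccEquiv t).symm id
  have hy : Injective y :=
    finProdFinEquiv.injective.comp ((finSuccEquiv t).symm.injective.prodMap injective_id)
  have hFy : F = stdForm k y (e - 1) := by
    funext j
    rw [hF, stdForm]
    refine Finset.sum_congr rfl fun i _ => ?_
    congr 3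
    simp
    ring
  subst hFy
  have : Nonempty (Fin p) := ⟨⟨0, hp⟩⟩
  have : Nonempty (Fin t) := ⟨⟨0, by omega⟩⟩
  have hind : LinearIndependent k (stdForm k y (e - 1)) := linearIndependent_stdForm hy (e - 1)
  set Φ := Fintype.linearCombination k (stdForm k y (e - 1))
  have hΦ : ∀ U : Submodule k (Fin t → k), U ≠ ⊥ → ∀ u, 1 ≤ u → u ≤ e - 1 →
      hvec k e (U.map Φ) u = (finrank k U + 1) * p := fun U hU u hu hue => by
    simpa using hvec_map_stdForm hy hU hu (by omega)
  refine ⟨hind, fun c hc _ W hW hWc u hu hue => ?_, fun u hu hue => ?_⟩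
  · obtain ⟨U, rfl, hUW⟩ := Submodule.exists_map_eq_of_le_range
      hind.fintypeLinearCombination_injective (hW.trans (Fintype.range_linearCombination k _).ge)
    rw [hΦ U (Submodule.one_le_finrank_iff.1 (by omega)) u hu hue, hUW, hWc]
  · rw [← Fintype.range_linearCombination, ← Submodule.map_top, hΦ ⊤ top_ne_bot u hu hue,
      finrank_top, Module.finrank_fin_fun]
end
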